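/- arXiv:2504.14841 — 6 statements merged into one kernel-verified Lean document; each statement's English description precedes it below -/
import Mathlib

section
/- Let A be the (ℓ+1)×(ℓ+1) real symmetric tridiagonal matrix with diagonal entries p_0,...,p_ℓ and all off-diagonal (super/sub-diagonal) entries equal to -λ for some λ > 0. Suppose there exists an index i and C > 0 such that p_j ≥ p_i + C for all j ≠ i. Then the spectral gap of A (difference between its two smallest eigenvalues) is at least C - 4λ. -/
/-!
Testing the quadratic form on the basis vector `e_i` gives `μ₀ ≤ p i`. For the second eigenvalue
`μ₁`, some nonzero combination of the two lowest eigenvectors vanishes at `i`, and its Rayleigh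
quotient is at most `μ₁`. On vectors vanishing at `i` the diagonal part contributes at least
`p i + C`, while the off-diagonal part is `-λ` times the adjacency form of the path graph, which is
at most twice the squared norm because the Laplacian `D - Adj` is positive semidefinite and the
path has maximal degree `2`. Hence `μ₁ - μ₀ ≥ C - 2λ ≥ C - 4λ`.
-/

/-- The `(ℓ+1) × (ℓ+1)` real symmetric tridiagonal matrix with diagonal entries `p 0, ..., p ℓ`
and all off-diagonal (super/sub-diagonal) entries equal to `-lam`. -/
def tridiag (ℓ : ℕ) (p : Fin (ℓ + 1) → ℝ) (lam : ℝ) :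
    Matrix (Fin (ℓ + 1)) (Fin (ℓ + 1)) ℝ :=
  Matrix.of fun i j =>
    if i = j then p i
    else if (i : ℕ) + 1 = (j : ℕ) ∨ (j : ℕ) + 1 = (i : ℕ) then -lam
    else 0

/-- The eigenvalues of a Hermitian matrix, sorted in increasing order. -/
noncomputable def sortedEigenvalues {N : ℕ} {𝕜 : Type} [RCLike 𝕜]
    {A : Matrix (Fin N) (Fin N) 𝕜} (hA : A.IsHermitian) : Fin N → ℝ :=
  hA.eigenvalues ∘ Tuple.sort hA.eigenvalues

open Matrix

namespace SimpleGraph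

variable {V : Type*} [Fintype V] [DecidableEq V]

theorem dotProduct_mulVec_adjMatrix_le (G : SimpleGraph V) [DecidableRel G.Adj] (x : V → ℝ) :
    x ⬝ᵥ (G.adjMatrix ℝ *ᵥ x) ≤ G.maxDegree * (x ⬝ᵥ x) := by
  have hlap : 0 ≤ x ⬝ᵥ (G.lapMatrix ℝ *ᵥ x) := by
    simpa using (G.posSemidef_lapMatrix ℝ).dotProduct_mulVec_nonneg x
  have hdeg : x ⬝ᵥ (G.degMatrix ℝ *ᵥ x) ≤ G.maxDegree * (x ⬝ᵥ x) := by
    rw [dotProduct_mulVec_degMatrix, dotProduct, Finset.mul_sum]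
    refine Finset.sum_le_sum fun v _ => ?_
    rw [mul_assoc]
    exact mul_le_mul_of_nonneg_right (mod_cast G.degree_le_maxDegree v) (mul_self_nonneg _)
  rw [lapMatrix, sub_mulVec, dotProduct_sub] at hlap
  linarith

instance (n : ℕ) : DecidableRel (pathGraph n).Adj :=
  fun _ _ => decidable_of_iff' _ pathGraph_adj

theorem pathGraph_degree_le_two {n : ℕ} (v : Fin n) : (pathGraph n).degree v ≤ 2 := by
  calc (pathGraph n).degree v
      ≤ ({(v : ℕ) - 1, (v : ℕ) + 1} : Finset ℕ).card := by
        rw [← card_neighborFinset_eq_degree]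
        refine Finset.card_le_card_of_injOn Fin.val (fun u hu => ?_) Fin.val_injective.injOn
        rw [Finset.mem_coe, mem_neighborFinset, pathGraph_adj] at hu
        simp only [Finset.coe_insert, Finset.coe_singleton, Set.mem_insert_iff,
          Set.mem_singleton_iff]
        omega
    _ ≤ 2 := Finset.card_le_two

theorem maxDegree_pathGraph_le_two (n : ℕ) : (pathGraph n).maxDegree ≤ 2 :=
  maxDegree_le_of_forall_degree_le _ _ pathGraph_degree_le_two

end SimpleGraph

section Spectrum

variable {ι : Type*} [Fintype ι] {A : Matrix ι ι ℝ}

theorem dotProduct_mulVec_add_le_of_eigenvectors {u w : ι → ℝ} {μ ν : ℝ} (hμν : μ ≤ ν)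
    (hu : A *ᵥ u = μ • u) (hw : A *ᵥ w = ν • w) (huw : u ⬝ᵥ w = 0) (s t : ℝ) :
    (s • u + t • w) ⬝ᵥ (A *ᵥ (s • u + t • w)) ≤ ν * ((s • u + t • w) ⬝ᵥ (s • u + t • w)) := by
  have hwu : w ⬝ᵥ u = 0 := by rw [dotProduct_comm, huw]
  simp only [mulVec_add, mulVec_smul, hu, hw, add_dotProduct, dotProduct_add, smul_dotProduct,
    dotProduct_smul, huw, hwu, smul_eq_mul]
  have huu : 0 ≤ u ⬝ᵥ u := by simpa using dotProduct_self_star_nonneg u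
  nlinarith [mul_nonneg (mul_self_nonneg s) huu]

variable [DecidableEq ι]

open scoped MatrixOrder in
theorem Matrix.IsHermitian.mul_dotProduct_self_le_of_forall_le_eigenvalues (hA : A.IsHermitian)
    {m : ℝ} (hm : ∀ k, m ≤ hA.eigenvalues k) (x : ι → ℝ) :
    m * (x ⬝ᵥ x) ≤ x ⬝ᵥ (A *ᵥ x) := by
  have hle : algebraMap ℝ _ m ≤ A := by
    rw [algebraMap_le_iff_le_spectrum (a := A) hA.isSelfAdjoint,
      hA.spectrum_real_eq_range_eigenvalues]
    rintro _ ⟨k, rfl⟩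
    exact hm k
  have h := (nonneg_iff_posSemidef.mp (sub_nonneg.mpr hle)).dotProduct_mulVec_nonneg x
  simp only [star_trivial, sub_mulVec, Algebra.algebraMap_eq_smul_one, smul_mulVec, one_mulVec,
    dotProduct_sub, dotProduct_smul, smul_eq_mul] at h
  linarith

theorem Matrix.IsHermitian.eigenvectorBasis_dotProduct (hA : A.IsHermitian) (s t : ι) :
    (hA.eigenvectorBasis s).ofLp ⬝ᵥ (hA.eigenvectorBasis t).ofLp = if s = t then 1 else 0 := by
  rw [← orthonormal_iff_ite.mp hA.eigenvectorBasis.orthonormal s t,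
    EuclideanSpace.inner_eq_star_dotProduct, star_trivial, dotProduct_comm]

end Spectrum

section SortedEigenvalues

variable {n : ℕ} {A : Matrix (Fin n) (Fin n) ℝ} (hA : A.IsHermitian)

theorem sortedEigenvalues_monotone : Monotone (sortedEigenvalues hA) :=
  Tuple.monotone_sort _

theorem sortedEigenvalues_zero_le_eigenvalues [NeZero n] (k : Fin n) :
    sortedEigenvalues hA 0 ≤ hA.eigenvalues k := by
  simpa [sortedEigenvalues] using
    sortedEigenvalues_monotone hA (Fin.zero_le ((Tuple.sort hA.eigenvalues).symm k))

theorem sortedEigenvalues_zero_le_apply_self [NeZero n] (i : Fin n) :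
    sortedEigenvalues hA 0 ≤ A i i := by
  simpa [single_dotProduct, mulVec_single] using
    hA.mul_dotProduct_self_le_of_forall_le_eigenvalues (sortedEigenvalues_zero_le_eigenvalues hA)
      (Pi.single i 1)

theorem le_sortedEigenvalues_one [NeZero n] (hn : 1 < n) (v : Fin n → ℝ) {c : ℝ}
    (h : ∀ x, v ⬝ᵥ x = 0 → c * (x ⬝ᵥ x) ≤ x ⬝ᵥ (A *ᵥ x)) : c ≤ sortedEigenvalues hA 1 := by
  set σ := Tuple.sort hA.eigenvalues
  set u := (hA.eigenvectorBasis (σ 0)).ofLp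
  set w := (hA.eigenvectorBasis (σ 1)).ofLp
  have h01 : σ 0 ≠ σ 1 := σ.injective.ne (by simp [Fin.ext_iff, Nat.mod_eq_of_lt hn])
  have huu : u ⬝ᵥ u = 1 := by simp [u, hA.eigenvectorBasis_dotProduct]
  have hww : w ⬝ᵥ w = 1 := by simp [w, hA.eigenvectorBasis_dotProduct]
  have huw : u ⬝ᵥ w = 0 := by simp [u, w, hA.eigenvectorBasis_dotProduct, h01]
  have hwu : w ⬝ᵥ u = 0 := by rw [dotProduct_comm, huw]
  have key : ∀ s t : ℝ, v ⬝ᵥ (s • u + t • w) = 0 →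
      c * (s ^ 2 + t ^ 2) ≤ sortedEigenvalues hA 1 * (s ^ 2 + t ^ 2) := by
    intro s t hv
    have hnorm : (s • u + t • w) ⬝ᵥ (s • u + t • w) = s ^ 2 + t ^ 2 := by
      simp only [add_dotProduct, dotProduct_add, smul_dotProduct, dotProduct_smul, huu, hww, huw,
        hwu, smul_eq_mul]
      ring
    rw [← hnorm]
    exact (h _ hv).trans <| dotProduct_mulVec_add_le_of_eigenvectors
      (sortedEigenvalues_monotone hA (Fin.zero_le 1)) (hA.mulVec_eigenvectorBasis _)
      (hA.mulVec_eigenvectorBasis _) huw s t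
  by_cases hvu : v ⬝ᵥ u = 0
  · exact le_of_mul_le_mul_right (by simpa [hvu] using key 1 0) one_pos
  · refine le_of_mul_le_mul_right (key (v ⬝ᵥ w) (-(v ⬝ᵥ u)) ?_)
      (by have := neg_ne_zero.mpr hvu; positivity)
    simp only [dotProduct_add, dotProduct_smul, smul_eq_mul]
    ring

end SortedEigenvalues

theorem tridiag_eq_diagonal_sub_smul_adjMatrix (ℓ : ℕ) (p : Fin (ℓ + 1) → ℝ) (lam : ℝ) :
    tridiag ℓ p lam = diagonal p - lam • (SimpleGraph.pathGraph (ℓ + 1)).adjMatrix ℝ := by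
  ext j k
  simp only [tridiag, of_apply, Matrix.sub_apply, diagonal_apply, Matrix.smul_apply,
    SimpleGraph.adjMatrix_apply, SimpleGraph.pathGraph_adj, smul_eq_mul]
  split_ifs <;> simp_all

theorem le_dotProduct_tridiag_mulVec {ℓ : ℕ} {p : Fin (ℓ + 1) → ℝ} {lam c : ℝ} (hlam : 0 ≤ lam)
    {i : Fin (ℓ + 1)} (hc : ∀ j, j ≠ i → c ≤ p j) {x : Fin (ℓ + 1) → ℝ} (hx : x i = 0) :
    (c - 2 * lam) * (x ⬝ᵥ x) ≤ x ⬝ᵥ (tridiag ℓ p lam *ᵥ x) := by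
  have hdiag : c * (x ⬝ᵥ x) ≤ x ⬝ᵥ (diagonal p *ᵥ x) := by
    simp only [dotProduct, mulVec_diagonal, Finset.mul_sum]
    refine Finset.sum_le_sum fun j _ => ?_
    rcases eq_or_ne j i with rfl | hj
    · simp [hx]
    · nlinarith [hc j hj, mul_self_nonneg (x j)]
  have hxx : 0 ≤ x ⬝ᵥ x := by simpa using dotProduct_self_star_nonneg x
  have hadj : x ⬝ᵥ ((SimpleGraph.pathGraph (ℓ + 1)).adjMatrix ℝ *ᵥ x) ≤ 2 * (x ⬝ᵥ x) :=
    (SimpleGraph.dotProduct_mulVec_adjMatrix_le _ x).trans <|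
      mul_le_mul_of_nonneg_right (mod_cast SimpleGraph.maxDegree_pathGraph_le_two _) hxx
  rw [tridiag_eq_diagonal_sub_smul_adjMatrix, sub_mulVec, smul_mulVec, dotProduct_sub,
    dotProduct_smul, smul_eq_mul]
  linarith [mul_le_mul_of_nonneg_left hadj hlam]

theorem tridiag_gap_single_general (ℓ : ℕ) (hℓ : 1 ≤ ℓ) (p : Fin (ℓ + 1) → ℝ) (lam C : ℝ)
    (hlam : 0 < lam) (i : Fin (ℓ + 1))
    (hp : ∀ j : Fin (ℓ + 1), j ≠ i → p j ≥ p i + C)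
    (hA : (tridiag ℓ p lam).IsHermitian) :
    sortedEigenvalues hA 1 - sortedEigenvalues hA 0 ≥ C - 4 * lam := by
  have hmin : sortedEigenvalues hA 0 ≤ p i := by
    simpa [tridiag] using sortedEigenvalues_zero_le_apply_self hA i
  have hsecond : p i + C - 2 * lam ≤ sortedEigenvalues hA 1 :=
    le_sortedEigenvalues_one hA (by omega) (Pi.single i 1) fun x hx =>
      le_dotProduct_tridiag_mulVec hlam.le hp (by simpa [single_dotProduct] using hx)
  linarith

/-- if `p j ≥ p i + C` for all `j ≠ i`, the spectral gap (second smallest minus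
smallest eigenvalue) of the tridiagonal matrix is at least `C - 4λ`. -/
theorem tridiag_gap_single (ℓ : ℕ) (hℓ : 1 ≤ ℓ) (p : Fin (ℓ + 1) → ℝ) (lam C : ℝ)
    (hlam : 0 < lam) (hC : 0 < C) (i : Fin (ℓ + 1))
    (hp : ∀ j : Fin (ℓ + 1), j ≠ i → p j ≥ p i + C)
    (hA : (tridiag ℓ p lam).IsHermitian) :
    sortedEigenvalues hA 1 - sortedEigenvalues hA 0 ≥ C - 4 * lam :=
  tridiag_gap_single_general ℓ hℓ p lam C hlam i hp hA
end

section
/- Let A be the (ℓ+1)×(ℓ+1) real symmetric tridiagonal matrix with diagonal entries p_0,...,p_ℓ and off-diagonal entries -λ (λ > 0). Suppose for some index i and C > 0: p_j ≥ p_i + C for all j ≠ i. Then the ground state (unit eigenvector of the smallest eigenvalue) v of A satisfies ‖α·e_i − v‖ ≤ 8λ/C for some scalar α with |α| = 1, where e_i is the i-th standard basis vector. -/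
/-- The Euclidean norm of a real vector. -/
noncomputable def vecNorm {N : ℕ} (v : Fin N → ℝ) : ℝ :=
  Real.sqrt (∑ j, v j ^ 2)

open Finset Matrix

namespace Matrix.IsHermitian

variable {𝕜 : Type} [RCLike 𝕜] {n : Type*} [Fintype n] [DecidableEq n] {A : Matrix n n 𝕜}

theorem sum_norm_sq_eigenvectorBasis_apply (hA : A.IsHermitian) (i : n) :
    ∑ k, ‖hA.eigenvectorBasis k i‖ ^ 2 = 1 := by
  have h := congr_fun₂ (Unitary.coe_mul_star_self hA.eigenvectorUnitary) i i
  simp only [mul_apply, Unitary.coe_star, star_apply, eigenvectorUnitary_apply, one_apply_eq,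
    RCLike.star_def, RCLike.mul_conj] at h
  exact_mod_cast h

theorem re_diag_eq_sum_eigenvalues (hA : A.IsHermitian) (i : n) :
    RCLike.re (A i i) = ∑ k, hA.eigenvalues k * ‖hA.eigenvectorBasis k i‖ ^ 2 := by
  conv_lhs => rw [hA.spectral_theorem]
  simp only [Unitary.conjStarAlgAut_apply, mul_apply, diagonal_apply, mul_ite, mul_zero,
    sum_ite_eq', mem_univ, if_true, star_apply, eigenvectorUnitary_apply,
    Function.comp_apply, RCLike.star_def, map_sum]
  refine sum_congr rfl fun k _ => ?_
  rw [mul_right_comm, RCLike.mul_conj, ← RCLike.ofReal_pow, ← RCLike.ofReal_mul, RCLike.ofReal_re,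
    mul_comm]

theorem le_re_diag_of_forall_le_eigenvalues (hA : A.IsHermitian) {μ : ℝ}
    (hμ : ∀ k, μ ≤ hA.eigenvalues k) (i : n) : μ ≤ RCLike.re (A i i) :=
  calc μ = ∑ k, μ * ‖hA.eigenvectorBasis k i‖ ^ 2 := by
        rw [← mul_sum, hA.sum_norm_sq_eigenvectorBasis_apply, mul_one]
    _ ≤ ∑ k, hA.eigenvalues k * ‖hA.eigenvectorBasis k i‖ ^ 2 := by gcongr; exact hμ _
    _ = RCLike.re (A i i) := (hA.re_diag_eq_sum_eigenvalues i).symm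

end Matrix.IsHermitian

theorem sortedEigenvalues_zero_le {N : ℕ} [NeZero N] {𝕜 : Type} [RCLike 𝕜]
    {A : Matrix (Fin N) (Fin N) 𝕜} (hA : A.IsHermitian) (k : Fin N) :
    sortedEigenvalues hA 0 ≤ hA.eigenvalues k := by
  simpa [sortedEigenvalues] using
    Tuple.monotone_sort hA.eigenvalues (Fin.zero_le ((Tuple.sort hA.eigenvalues).symm k))

theorem sum_mulVec_sq_le {ι : Type*} [Fintype ι] (W : Matrix ι ι ℝ) (hW : ∀ j k, 0 ≤ W j k)
    {d : ℝ} (hrow : ∀ j, ∑ k, W j k ≤ d) (hcol : ∀ k, ∑ j, W j k ≤ d) (v : ι → ℝ) :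
    ∑ j, (W *ᵥ v) j ^ 2 ≤ d ^ 2 * ∑ k, v k ^ 2 := by
  rcases isEmpty_or_nonempty ι with hι | ⟨⟨j₀⟩⟩
  · simp
  have hd : 0 ≤ d := (sum_nonneg fun k _ => hW j₀ k).trans (hrow j₀)
  have hrow_sq : ∀ j, (W *ᵥ v) j ^ 2 ≤ d * ∑ k, W j k * v k ^ 2 := fun j => by
    calc (W *ᵥ v) j ^ 2 ≤ (∑ k, W j k) * ∑ k, W j k * v k ^ 2 := by
          refine sum_sq_le_sum_mul_sum_of_sq_le_mul _ (fun k _ => hW j k)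
            (fun k _ => mul_nonneg (hW j k) (sq_nonneg _)) fun k _ => (by ring : _ = _).le
      _ ≤ d * ∑ k, W j k * v k ^ 2 := by
          gcongr
          · exact sum_nonneg fun k _ => mul_nonneg (hW j k) (sq_nonneg _)
          · exact hrow j
  calc ∑ j, (W *ᵥ v) j ^ 2 ≤ ∑ j, d * ∑ k, W j k * v k ^ 2 := sum_le_sum fun j _ => hrow_sq j
    _ = d * ∑ k, (∑ j, W j k) * v k ^ 2 := by simp_rw [← mul_sum, sum_mul]; rw [sum_comm]
    _ ≤ d * ∑ k, d * v k ^ 2 := by gcongr with k; exact hcol k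
    _ = d ^ 2 * ∑ k, v k ^ 2 := by rw [← mul_sum]; ring

def pathAdj (n : ℕ) : Matrix (Fin n) (Fin n) ℝ :=
  of fun j k => if (j : ℕ) + 1 = k ∨ (k : ℕ) + 1 = j then 1 else 0

theorem pathAdj_comm {n : ℕ} (j k : Fin n) : pathAdj n j k = pathAdj n k j := by
  simp only [pathAdj, of_apply, or_comm]

theorem pathAdj_nonneg {n : ℕ} (j k : Fin n) : 0 ≤ pathAdj n j k := by
  simp only [pathAdj, of_apply]; split_ifs <;> norm_num

theorem sum_pathAdj_le_two {n : ℕ} (j : Fin n) : ∑ k, pathAdj n j k ≤ 2 := by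
  simp only [pathAdj, of_apply, sum_boole]
  have hsub : (univ.filter fun k : Fin n => (j : ℕ) + 1 = k ∨ (k : ℕ) + 1 = j).map Fin.valEmbedding
      ⊆ {(j : ℕ) + 1, (j : ℕ) - 1} := by
    intro x hx
    simp only [mem_map, mem_filter, mem_univ, true_and, Fin.valEmbedding_apply] at hx
    simp only [mem_insert, mem_singleton]
    omega
  have := (card_le_card hsub).trans (card_insert_le _ _)
  rw [card_map] at this
  exact_mod_cast this

theorem tridiag_eq_diagonal_sub (ℓ : ℕ) (p : Fin (ℓ + 1) → ℝ) (lam : ℝ) :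
    tridiag ℓ p lam = diagonal p - lam • pathAdj (ℓ + 1) := by
  ext j k
  by_cases hjk : j = k
  · subst hjk; simp [tridiag, pathAdj]
  · simp only [tridiag, pathAdj, Matrix.sub_apply, Matrix.smul_apply, diagonal_apply_ne _ hjk,
      of_apply, if_neg hjk]
    split_ifs <;> simp

theorem sub_mul_eq_of_mulVec_diagonal_sub_smul {ι : Type*} [Fintype ι] [DecidableEq ι]
    {p v : ι → ℝ} {lam μ : ℝ} {W : Matrix ι ι ℝ} (h : (diagonal p - lam • W) *ᵥ v = μ • v)
    (j : ι) : (p j - μ) * v j = lam * (W *ᵥ v) j := by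
  have hj := congr_fun h j
  rw [sub_mulVec, smul_mulVec, Pi.sub_apply, mulVec_diagonal, Pi.smul_apply, Pi.smul_apply,
    smul_eq_mul, smul_eq_mul] at hj
  linarith

theorem sq_mul_sum_erase_sq_le {ι : Type*} [Fintype ι] [DecidableEq ι] (i : ι) {C : ℝ}
    (hC : 0 ≤ C) {d : ι → ℝ} (hd : ∀ j ≠ i, C ≤ d j) (v : ι → ℝ) :
    C ^ 2 * ∑ j ∈ univ.erase i, v j ^ 2 ≤ ∑ j, (d j * v j) ^ 2 :=
  calc C ^ 2 * ∑ j ∈ univ.erase i, v j ^ 2 ≤ ∑ j ∈ univ.erase i, (d j * v j) ^ 2 := by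
        rw [mul_sum]
        refine sum_le_sum fun j hj => ?_
        have hdj := hd j (ne_of_mem_erase hj)
        rw [mul_pow]
        gcongr
    _ ≤ ∑ j, (d j * v j) ^ 2 :=
        sum_le_sum_of_subset_of_nonneg (erase_subset _ _) fun _ _ _ => sq_nonneg _

theorem exists_abs_eq_one_sum_sq_sub_le {ι : Type*} [Fintype ι] [DecidableEq ι] {v : ι → ℝ}
    (hv : ∑ j, v j ^ 2 = 1) (i : ι) :
    ∃ α : ℝ, |α| = 1 ∧
      ∑ j, (α * (if j = i then 1 else 0) - v j) ^ 2 ≤ 2 * ∑ j ∈ univ.erase i, v j ^ 2 := by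
  have hsplit : ∀ α : ℝ, ∑ j, (α * (if j = i then 1 else 0) - v j) ^ 2
      = (α - v i) ^ 2 + ∑ j ∈ univ.erase i, v j ^ 2 := fun α => by
    rw [← add_sum_erase _ _ (mem_univ i), if_pos rfl, mul_one]
    congr 1
    refine sum_congr rfl fun j hj => ?_
    rw [if_neg (ne_of_mem_erase hj)]
    ring
  have hrest : ∑ j ∈ univ.erase i, v j ^ 2 = 1 - v i ^ 2 := by
    rw [← hv, ← add_sum_erase _ _ (mem_univ i), add_sub_cancel_left]
  have hvi : v i ^ 2 ≤ 1 := by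
    linarith [hrest ▸ sum_nonneg fun j (_ : j ∈ univ.erase i) => sq_nonneg (v j)]
  rcases le_total 0 (v i) with h | h
  · refine ⟨1, abs_one, ?_⟩
    rw [hsplit, hrest]
    nlinarith
  · refine ⟨-1, by simp, ?_⟩
    rw [hsplit, hrest]
    nlinarith

theorem tridiag_ground_state_single_general (ℓ : ℕ) (p : Fin (ℓ + 1) → ℝ) (lam C : ℝ)
    (hlam : 0 < lam) (hC : 0 < C) (i : Fin (ℓ + 1))
    (hp : ∀ j : Fin (ℓ + 1), j ≠ i → p j ≥ p i + C)
    (hA : (tridiag ℓ p lam).IsHermitian)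
    (v : Fin (ℓ + 1) → ℝ) (hv : vecNorm v = 1)
    (hev : (tridiag ℓ p lam).mulVec v = sortedEigenvalues hA 0 • v) :
    ∃ α : ℝ, |α| = 1 ∧
      vecNorm (fun j => α * (if j = i then 1 else 0) - v j) ≤ 8 * lam / C := by
  set μ := sortedEigenvalues hA 0
  have hsum : ∑ j, v j ^ 2 = 1 := by
    rwa [vecNorm, Real.sqrt_eq_one] at hv
  have hμ : μ ≤ p i :=
    calc μ ≤ RCLike.re (tridiag ℓ p lam i i) :=
          hA.le_re_diag_of_forall_le_eigenvalues (sortedEigenvalues_zero_le hA) i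
      _ = p i := by simp [tridiag]
  have heq := sub_mul_eq_of_mulVec_diagonal_sub_smul (tridiag_eq_diagonal_sub ℓ p lam ▸ hev)
  have hoff : C ^ 2 * ∑ j ∈ univ.erase i, v j ^ 2 ≤ 4 * lam ^ 2 :=
    calc C ^ 2 * ∑ j ∈ univ.erase i, v j ^ 2 ≤ ∑ j, ((p j - μ) * v j) ^ 2 :=
          sq_mul_sum_erase_sq_le i hC.le (fun j hj => by linarith [hp j hj]) v
      _ = lam ^ 2 * ∑ j, (pathAdj (ℓ + 1) *ᵥ v) j ^ 2 := by
          rw [mul_sum]; exact sum_congr rfl fun j _ => by rw [heq, mul_pow]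
      _ ≤ lam ^ 2 * (2 ^ 2 * ∑ j, v j ^ 2) := by
          gcongr
          refine sum_mulVec_sq_le _ pathAdj_nonneg sum_pathAdj_le_two (fun k => ?_) v
          simpa only [pathAdj_comm _ k] using sum_pathAdj_le_two k
      _ = 4 * lam ^ 2 := by rw [hsum]; ring
  obtain ⟨α, hα, hle⟩ := exists_abs_eq_one_sum_sq_sub_le hsum i
  refine ⟨α, hα, Real.sqrt_le_iff.mpr ⟨by positivity, ?_⟩⟩
  calc _ ≤ 2 * ∑ j ∈ univ.erase i, v j ^ 2 := hle
    _ ≤ 2 * (4 * lam ^ 2 / C ^ 2) := by gcongr; rwa [le_div_iff₀' (by positivity)]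
    _ ≤ (8 * lam / C) ^ 2 := by
          rw [div_pow, ← mul_div_assoc]; gcongr; nlinarith

/-- under `p j ≥ p i + C` for all `j ≠ i`, any unit ground state `v` of the
tridiagonal matrix satisfies `‖α • e_i − v‖ ≤ 8λ/C` for some `α` with `|α| = 1`. -/
theorem tridiag_ground_state_single (ℓ : ℕ) (hℓ : 1 ≤ ℓ) (p : Fin (ℓ + 1) → ℝ) (lam C : ℝ)
    (hlam : 0 < lam) (hC : 0 < C) (i : Fin (ℓ + 1))
    (hp : ∀ j : Fin (ℓ + 1), j ≠ i → p j ≥ p i + C)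
    (hA : (tridiag ℓ p lam).IsHermitian)
    (v : Fin (ℓ + 1) → ℝ) (hv : vecNorm v = 1)
    (hev : (tridiag ℓ p lam).mulVec v = sortedEigenvalues hA 0 • v) :
    ∃ α : ℝ, |α| = 1 ∧
      vecNorm (fun j => α * (if j = i then 1 else 0) - v j) ≤ 8 * lam / C :=
  tridiag_ground_state_single_general ℓ p lam C hlam hC i hp hA v hv hev
end

section
/- Consider the ℓ-qubit diagonal operator Q := Δ·((ℓ−1)I + Z_1 − Z_ℓ − Σ_{i=1}^{ℓ−1} Z_i Z_{i+1}) with Δ > 0, where Z_i acts as Z on qubit i. For each computational basis state |x⟩ with x ∈ {0,1}^ℓ, the diagonal entry α_x := ⟨x|Q|x⟩ satisfies: α_x = 0 if x = 1^j 0^{ℓ−j} for some 0 ≤ j ≤ ℓ, and α_x ≥ Δ otherwise. -/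
/-- `(−1)^b`: the sign `⟨x|Z_i|x⟩ = (−1)^{x_i}` of a bit. -/
def bsign (b : Bool) : ℝ := if b then -1 else 1

/-- The diagonal entry `α_x = ⟨x|Q|x⟩` of the `(m+1)`-qubit diagonal operator
`Q = Δ((ℓ−1)I + Z_1 − Z_ℓ − Σ_{i=1}^{ℓ−1} Z_i Z_{i+1})` with `ℓ = m + 1` qubits. -/
def alphaQ (m : ℕ) (Δ : ℝ) (x : Fin (m + 1) → Bool) : ℝ :=
  Δ * ((m : ℝ) + bsign (x 0) - bsign (x (Fin.last m)) -
    ∑ i : Fin m, bsign (x i.castSucc) * bsign (x i.succ))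

/-!
Writing `s_i = ⟨x|Z_i|x⟩` and telescoping `s_1 − s_ℓ = Σ (s_i − s_{i+1})`, one gets
`α_x = Δ Σ_{i<ℓ} (1 + s_i)(1 − s_{i+1})`. Each term is `4` when the bits jump from `0` to `1`
and `0` otherwise, so `α_x = 4Δ · #ascents(x)`. A bit string has no ascent exactly when it is
nonincreasing, i.e. a domain wall `1^j 0^{ℓ−j}`; otherwise `α_x ≥ 4Δ`.
-/

open Finset

lemma Fin.sum_castSucc_sub_succ {G : Type*} [AddCommGroup G] {m : ℕ} (f : Fin (m + 1) → G) :
    ∑ i : Fin m, (f i.castSucc - f i.succ) = f 0 - f (Fin.last m) := by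
  rw [sum_sub_distrib, sub_eq_sub_iff_add_eq_add]
  exact (Fin.sum_univ_castSucc f).symm.trans (Fin.sum_univ_succ f)

lemma one_add_bsign_mul_one_sub_bsign (a b : Bool) :
    (1 + bsign a) * (1 - bsign b) = 4 * if a < b then 1 else 0 := by
  cases a <;> cases b <;> norm_num [bsign]

lemma alphaQ_eq_four_mul_card_ascents (m : ℕ) (Δ : ℝ) (x : Fin (m + 1) → Bool) :
    alphaQ m Δ x = 4 * Δ * #{i : Fin m | x i.castSucc < x i.succ} := by
  calc alphaQ m Δ x
      = Δ * ∑ i : Fin m, (1 + (bsign (x i.castSucc) - bsign (x i.succ)) -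
          bsign (x i.castSucc) * bsign (x i.succ)) := by
        rw [sum_sub_distrib, sum_add_distrib, Fin.sum_castSucc_sub_succ fun i => bsign (x i)]
        simp only [alphaQ, sum_const, card_univ, Fintype.card_fin, nsmul_eq_mul, mul_one]
        ring
    _ = Δ * ∑ i : Fin m, 4 * if x i.castSucc < x i.succ then 1 else 0 := by
        simp only [← one_add_bsign_mul_one_sub_bsign]
        ring_nf
    _ = 4 * Δ * #{i : Fin m | x i.castSucc < x i.succ} := by
        rw [← mul_sum, sum_boole]
        ring

lemma Fin.antitone_iff_exists_eq_decide_lt {n : ℕ} (x : Fin n → Bool) :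
    Antitone x ↔ ∃ j : ℕ, ∀ i : Fin n, x i = decide ((i : ℕ) < j) := by
  refine ⟨fun hx => ⟨#{i | x i}, fun i => ?_⟩, fun ⟨j, hj⟩ a b hab => ?_⟩
  · cases hxi : x i
    · have hsub : ({k | x k} : Finset (Fin n)) ⊆ Iio i := fun k hk => by
        simp only [mem_filter, mem_univ, true_and, mem_Iio] at hk ⊢
        by_contra hki
        simpa [hxi] using Bool.le_iff_imp.1 (hx (not_lt.1 hki)) hk
      have := card_le_card hsub
      rw [Fin.card_Iio] at this
      simpa using this
    · have hsub : Iic i ⊆ ({k | x k} : Finset (Fin n)) := fun k hk => by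
        simp only [mem_filter, mem_univ, true_and, mem_Iic] at hk ⊢
        exact Bool.le_iff_imp.1 (hx hk) hxi
      have := card_le_card hsub
      rw [Fin.card_Iic] at this
      simpa using this
  · rw [hj, hj, Bool.le_iff_imp]
    simp only [decide_eq_true_eq]
    exact lt_of_le_of_lt (Fin.le_def.1 hab)

lemma card_ascents_eq_zero_iff_antitone {α : Type*} [LinearOrder α] {m : ℕ}
    (x : Fin (m + 1) → α) : #{i : Fin m | x i.castSucc < x i.succ} = 0 ↔ Antitone x := by
  simp only [card_eq_zero, filter_eq_empty_iff, mem_univ, true_implies, not_lt,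
    Fin.antitone_iff_succ_le]

/-- `α_x = 0` if `x` is a domain-wall string `1^j 0^{ℓ−j}`, and `α_x ≥ Δ`
otherwise, provided `Δ > 0`. -/
theorem alphaQ_domain_wall (m : ℕ) (Δ : ℝ) (hΔ : 0 < Δ) (x : Fin (m + 1) → Bool) :
    (∀ j : ℕ, j ≤ m + 1 → (∀ i : Fin (m + 1), x i = decide ((i : ℕ) < j)) →
      alphaQ m Δ x = 0) ∧
    ((¬ ∃ j : ℕ, ∀ i : Fin (m + 1), x i = decide ((i : ℕ) < j)) →
      alphaQ m Δ x ≥ Δ) := by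
  simp only [alphaQ_eq_four_mul_card_ascents]
  refine ⟨fun j _ hx => ?_, fun hx => ?_⟩
  · have hanti : Antitone x := (Fin.antitone_iff_exists_eq_decide_lt x).2 ⟨j, hx⟩
    simp [(card_ascents_eq_zero_iff_antitone x).2 hanti]
  · have hanti : ¬Antitone x := mt (Fin.antitone_iff_exists_eq_decide_lt x).1 hx
    have hone : (1 : ℝ) ≤ #{i : Fin m | x i.castSucc < x i.succ} := by
      exact_mod_cast Nat.one_le_iff_ne_zero.2 (mt (card_ascents_eq_zero_iff_antitone x).1 hanti)
    nlinarith
end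

section
/- Let D be an n-qubit diagonal Hermitian matrix and define Ď: [−1,1]^n → ℝ by Ď(ξ) = min{1, ξ_min/w}·⟨θ(ξ)|D|θ(ξ)⟩, where ξ_min = min_i |ξ_i|, θ(ξ)_i = 1 if ξ_i < 0 and 0 otherwise, and w ∈ (0,1) is a fixed constant. Then Ď is continuous on [−1,1]^n and Lipschitz with constant O(‖D‖/w). -/
/-!
Write `Ď(ξ) = g(ξ) · d(θ(ξ))` with the ramp `g(ξ) = min{1, ξ_min/w}`. Since `ξ ↦ ξ_min` is
`1`-Lipschitz, `g` is `w⁻¹`-Lipschitz and bounded by `ξ_min/w`. Off the jumps of the sign pattern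
`θ` this gives the Lipschitz bound `‖D‖/w` directly. Across a jump, some coordinate changes sign
between `ξ` and `η`, so `ξ_min` and `η_min` are both at most `‖ξ - η‖`, and each of the two
terms is at most `‖D‖ ‖ξ - η‖/w` on its own.
-/

/-- The box `[−1,1]^n` in Euclidean space. -/
def box (n : ℕ) : Set (EuclideanSpace ℝ (Fin n)) :=
  {ξ | ∀ i, ξ i ∈ Set.Icc (-1 : ℝ) 1}

/-- The continuous interpolation `Ď(ξ) = min{1, ξ_min/w} · ⟨θ(ξ)|D|θ(ξ)⟩` of a diagonal
`(n+1)`-qubit Hamiltonian `D` (given by its diagonal entries `dD : (Fin (n+1) → Bool) → ℝ`),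
where `ξ_min = minᵢ |ξᵢ|` and `θ(ξ)ᵢ = 1` iff `ξᵢ < 0`. -/
noncomputable def Dcheck (n : ℕ) (w : ℝ) (dD : (Fin (n + 1) → Bool) → ℝ)
    (ξ : EuclideanSpace ℝ (Fin (n + 1))) : ℝ :=
  min 1 ((Finset.univ.inf' Finset.univ_nonempty fun i => |ξ i|) / w) *
    dD (fun i => decide (ξ i < 0))

open Finset

section LinearOrderedAddCommGroup

variable {α : Type*} [AddCommGroup α] [LinearOrder α] [IsOrderedAddMonoid α]

theorem abs_le_abs_sub_of_not_neg_iff {a b : α} (h : ¬(a < 0 ↔ b < 0)) : |a| ≤ |a - b| := by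
  rcases lt_or_ge a 0 with ha | ha
  · have hb : 0 ≤ b := not_lt.mp fun hb => h (iff_of_true ha hb)
    rw [abs_of_neg ha, abs_of_neg (sub_neg.mpr (ha.trans_le hb))]
    exact neg_le_neg (sub_le_self a hb)
  · have hb : b < 0 := not_le.mp fun hb => h (iff_of_false ha.not_gt hb.not_gt)
    rw [abs_of_nonneg ha, abs_of_nonneg (sub_nonneg.mpr (hb.le.trans ha))]
    exact (le_sub_self_iff a).mpr hb.le

theorem abs_min_sub_min_le_abs_sub (c a b : α) : |min c a - min c b| ≤ |a - b| := by
  simpa using abs_min_sub_min_le_max c a c b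

theorem abs_inf'_sub_inf'_le {ι : Type*} {s : Finset ι} (hs : s.Nonempty) {f g : ι → α} {c : α}
    (h : ∀ i ∈ s, |f i - g i| ≤ c) : |s.inf' hs f - s.inf' hs g| ≤ c := by
  have inf'_sub_le_inf' : ∀ f g : ι → α, (∀ i ∈ s, |f i - g i| ≤ c) →
      s.inf' hs f - s.inf' hs g ≤ c := fun f g h =>
    sub_le_comm.mp <| le_inf' hs g fun i hi =>
      (sub_le_sub_right (inf'_le f hi) c).trans (sub_le_comm.mp ((le_abs_self _).trans (h i hi)))
  exact abs_sub_le_iff.mpr ⟨inf'_sub_le_inf' f g h,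
    inf'_sub_le_inf' g f fun i hi => abs_sub_comm (g i) (f i) ▸ h i hi⟩

end LinearOrderedAddCommGroup

theorem lipschitzWith_mul_comp_of_abs_le_at_jumps {X β : Type*} [PseudoMetricSpace X]
    {g : X → ℝ} {θ : X → β} {d : β → ℝ} {K M : ℝ}
    (hg : ∀ x y, |g x - g y| ≤ K * dist x y) (hd : ∀ b, |d b| ≤ M)
    (hjump : ∀ x y, θ x ≠ θ y → |g x| ≤ K * dist x y) :
    LipschitzWith (Real.toNNReal (2 * M * K)) fun x => g x * d (θ x) := by
  refine LipschitzWith.of_dist_le' fun x y => ?_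
  have hKdist : 0 ≤ K * dist x y := (abs_nonneg _).trans (hg x y)
  have hM : 0 ≤ M := (abs_nonneg _).trans (hd (θ x))
  rw [Real.dist_eq]
  by_cases hθ : θ x = θ y
  · calc |g x * d (θ x) - g y * d (θ y)| = |g x - g y| * |d (θ y)| := by
          rw [hθ, ← sub_mul, abs_mul]
      _ ≤ K * dist x y * M := mul_le_mul (hg x y) (hd _) (abs_nonneg _) hKdist
      _ ≤ 2 * M * K * dist x y := by nlinarith [mul_nonneg hKdist hM]
  · have hgy : |g y| ≤ K * dist x y := dist_comm x y ▸ hjump y x (Ne.symm hθ)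
    calc |g x * d (θ x) - g y * d (θ y)| ≤ |g x| * |d (θ x)| + |g y| * |d (θ y)| := by
          simpa only [abs_mul] using abs_sub (g x * d (θ x)) (g y * d (θ y))
      _ ≤ K * dist x y * M + K * dist x y * M := by
          gcongr
          exacts [hjump x y hθ, hd _, hd _]
      _ = 2 * M * K * dist x y := by ring

namespace EuclideanSpace

variable {ι : Type*} [Fintype ι] [Nonempty ι]

/-- `ξ_min` in the paper. -/
noncomputable def minAbsCoord (ξ : EuclideanSpace ℝ ι) : ℝ :=
  univ.inf' univ_nonempty fun i => |ξ i|

theorem minAbsCoord_nonneg (ξ : EuclideanSpace ℝ ι) : 0 ≤ minAbsCoord ξ :=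
  le_inf' _ _ fun i _ => abs_nonneg (ξ i)

theorem minAbsCoord_le (ξ : EuclideanSpace ℝ ι) (i : ι) : minAbsCoord ξ ≤ |ξ i| :=
  inf'_le _ (mem_univ i)

theorem abs_minAbsCoord_sub_le (ξ η : EuclideanSpace ℝ ι) :
    |minAbsCoord ξ - minAbsCoord η| ≤ dist ξ η :=
  abs_inf'_sub_inf'_le _ fun i _ =>
    (abs_abs_sub_abs_le_abs_sub _ _).trans (PiLp.dist_apply_le ξ η i)

/-- `θ(ξ)` in the paper. -/
noncomputable def signPattern (ξ : EuclideanSpace ℝ ι) : ι → Bool :=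
  fun i => decide (ξ i < 0)

theorem minAbsCoord_le_dist_of_signPattern_ne {ξ η : EuclideanSpace ℝ ι}
    (h : signPattern ξ ≠ signPattern η) : minAbsCoord ξ ≤ dist ξ η := by
  obtain ⟨i, hi⟩ := Function.ne_iff.mp h
  calc minAbsCoord ξ ≤ |ξ i| := minAbsCoord_le ξ i
    _ ≤ |ξ i - η i| := abs_le_abs_sub_of_not_neg_iff (mt decide_eq_decide.mpr hi)
    _ ≤ dist ξ η := PiLp.dist_apply_le ξ η i

noncomputable def ramp (w : ℝ) (ξ : EuclideanSpace ℝ ι) : ℝ :=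
  min 1 (minAbsCoord ξ / w)

theorem abs_ramp_sub_le {w : ℝ} (hw : 0 < w) (ξ η : EuclideanSpace ℝ ι) :
    |ramp w ξ - ramp w η| ≤ w⁻¹ * dist ξ η :=
  calc _ ≤ |minAbsCoord ξ / w - minAbsCoord η / w| := abs_min_sub_min_le_abs_sub _ _ _
    _ = w⁻¹ * |minAbsCoord ξ - minAbsCoord η| := by
        rw [div_sub_div_same, abs_div, abs_of_pos hw, div_eq_inv_mul]
    _ ≤ w⁻¹ * dist ξ η := by gcongr; exact abs_minAbsCoord_sub_le ξ η

theorem ramp_nonneg {w : ℝ} (hw : 0 ≤ w) (ξ : EuclideanSpace ℝ ι) : 0 ≤ ramp w ξ :=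
  le_min zero_le_one (div_nonneg (minAbsCoord_nonneg ξ) hw)

theorem abs_ramp_le_of_signPattern_ne {w : ℝ} (hw : 0 ≤ w) {ξ η : EuclideanSpace ℝ ι}
    (h : signPattern ξ ≠ signPattern η) : |ramp w ξ| ≤ w⁻¹ * dist ξ η :=
  calc |ramp w ξ| = ramp w ξ := abs_of_nonneg (ramp_nonneg hw ξ)
    _ ≤ w⁻¹ * minAbsCoord ξ := (min_le_right _ _).trans_eq (div_eq_inv_mul _ _)
    _ ≤ w⁻¹ * dist ξ η := by
        gcongr
        exact minAbsCoord_le_dist_of_signPattern_ne h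

end EuclideanSpace

open EuclideanSpace

/-- `Ď` is continuous on `[−1,1]^n` and Lipschitz with constant `O(‖D‖/w)`,
where `‖D‖ = max_x |⟨x|D|x⟩|`. -/
theorem Dcheck_continuous_lipschitz :
    ∃ C : ℝ, 0 < C ∧ ∀ (n : ℕ) (w : ℝ) (dD : (Fin (n + 1) → Bool) → ℝ),
      0 < w → w < 1 →
      ContinuousOn (Dcheck n w dD) (box (n + 1)) ∧
      LipschitzOnWith
        (Real.toNNReal (C * (Finset.univ.sup' Finset.univ_nonempty fun x => |dD x|) / w))
        (Dcheck n w dD) (box (n + 1)) := by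
  refine ⟨2, two_pos, fun n w dD hw _ => ?_⟩
  have hlip : LipschitzWith (Real.toNNReal (2 * (univ.sup' univ_nonempty fun x => |dD x|) / w))
      fun ξ => ramp w ξ * dD (signPattern ξ) := by
    rw [div_eq_mul_inv]
    exact lipschitzWith_mul_comp_of_abs_le_at_jumps (abs_ramp_sub_le hw)
      (fun b => le_sup' (fun x => |dD x|) (mem_univ b))
      fun _ _ => abs_ramp_le_of_signPattern_ne hw.le
  exact ⟨hlip.continuous.continuousOn, hlip.lipschitzOnWith⟩
end

section
/- Let H be a Hermitian matrix with a nondegenerate ground state |g⟩ (minimal eigenvalue, with spectral gap δ > 0 to the rest of the spectrum). Suppose a Hermitian matrix H_sim together with isometry E simulates H with error (ε_enc, ε): i.e., there exists an isometry Ẽ whose image is the span of the eigenvectors of H_sim for its N smallest eigenvalues (N = dim of H's space), ‖H − Ẽ†H_sim Ẽ‖ ≤ ε, and ‖E − Ẽ‖ ≤ ε_enc. Then the spectral gap of H_sim is at least δ − 2ε. -/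
/-!
The columns of `Ẽ` are eigenvectors of `H_sim` for its `N` lowest eigenvalues `d₀ ≤ ⋯ ≤ d_{N-1}`,
so `Ẽ† H_sim Ẽ` is the diagonal matrix `D` of these, and the spectral gap of `H_sim` is `d₁ - d₀`.
The quadratic forms of `H` and `D` differ by at most `ε ‖v‖²`. Writing `μ₀ ≤ μ₁ ≤ ⋯` for the
eigenvalues of `H`, testing on the ground state of `H` gives `d₀ ≤ μ₀ + ε`; testing on a nonzero
vector supported on the first two coordinates and orthogonal to that ground state gives
`μ₁ ≤ d₁ + ε`.
-/

open Matrix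

/-- The ℓ² operator norm of a (possibly rectangular) complex matrix. -/
noncomputable def opNormRect {m n : ℕ} (A : Matrix (Fin m) (Fin n) ℂ) : ℝ :=
  ‖LinearMap.toContinuousLinearMap (Matrix.toEuclideanLin A)‖

open scoped InnerProductSpace

theorem Finset.mul_sum_le_sum_mul_of_ne_zero {ι : Type*} (s : Finset ι) {a : ℝ} {f x : ι → ℝ}
    (hx : ∀ i, 0 ≤ x i) (h : ∀ i, x i ≠ 0 → a ≤ f i) :
    a * ∑ i ∈ s, x i ≤ ∑ i ∈ s, f i * x i := by
  rw [Finset.mul_sum]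
  refine Finset.sum_le_sum fun i _ => ?_
  by_cases hi : x i = 0
  · simp [hi]
  · exact mul_le_mul_of_nonneg_right (h i hi) (hx i)

theorem Finset.sum_mul_le_mul_sum_of_ne_zero {ι : Type*} (s : Finset ι) {a : ℝ} {f x : ι → ℝ}
    (hx : ∀ i, 0 ≤ x i) (h : ∀ i, x i ≠ 0 → f i ≤ a) :
    ∑ i ∈ s, f i * x i ≤ a * ∑ i ∈ s, x i := by
  rw [Finset.mul_sum]
  refine Finset.sum_le_sum fun i _ => ?_
  by_cases hi : x i = 0
  · simp [hi]
  · exact mul_le_mul_of_nonneg_right (h i hi) (hx i)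

section QuadraticForm

variable {𝕜 n : Type*} [RCLike 𝕜] [Fintype n] [DecidableEq n]

theorem Matrix.re_inner_toEuclideanLin_diagonal (d : n → ℝ) (w : EuclideanSpace 𝕜 n) :
    RCLike.re ⟪w, toEuclideanLin (diagonal fun j => (d j : 𝕜)) w⟫_𝕜 = ∑ j, d j * ‖w j‖ ^ 2 := by
  simp only [PiLp.inner_apply, ofLp_toLpLin, toLin'_apply, mulVec_diagonal, map_sum]
  refine Finset.sum_congr rfl fun j _ => ?_
  rw [RCLike.inner_apply, mul_assoc, RCLike.mul_conj, ← RCLike.ofReal_pow,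
    RCLike.re_ofReal_mul, RCLike.ofReal_re]

theorem Matrix.IsHermitian.toEuclideanLin_eigenvectorBasis {A : Matrix n n 𝕜}
    (hA : A.IsHermitian) (i : n) :
    toEuclideanLin A (hA.eigenvectorBasis i) = (hA.eigenvalues i : 𝕜) • hA.eigenvectorBasis i := by
  ext j
  have := congrFun (hA.mulVec_eigenvectorBasis i) j
  rw [Pi.smul_apply, RCLike.real_smul_eq_coe_smul (K := 𝕜)] at this
  exact this

theorem Matrix.IsHermitian.re_inner_toEuclideanLin {A : Matrix n n 𝕜} (hA : A.IsHermitian)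
    (w : EuclideanSpace 𝕜 n) :
    RCLike.re ⟪w, toEuclideanLin A w⟫_𝕜 =
      ∑ i, hA.eigenvalues i * ‖⟪hA.eigenvectorBasis i, w⟫_𝕜‖ ^ 2 := by
  rw [← hA.eigenvectorBasis.sum_inner_mul_inner, map_sum]
  refine Finset.sum_congr rfl fun i _ => ?_
  rw [← (isSymmetric_toEuclideanLin_iff.2 hA) _ w, hA.toEuclideanLin_eigenvectorBasis,
    inner_smul_left, RCLike.conj_ofReal, mul_left_comm, ← inner_conj_symm w, RCLike.conj_mul,
    ← RCLike.ofReal_pow, RCLike.re_ofReal_mul, RCLike.ofReal_re]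

theorem Matrix.le_re_inner_toEuclideanLin_diagonal {d : n → ℝ} {c : ℝ} (hd : ∀ j, c ≤ d j)
    (w : EuclideanSpace 𝕜 n) :
    c * ‖w‖ ^ 2 ≤ RCLike.re ⟪w, toEuclideanLin (diagonal fun j => (d j : 𝕜)) w⟫_𝕜 := by
  rw [re_inner_toEuclideanLin_diagonal, EuclideanSpace.norm_sq_eq]
  exact Finset.mul_sum_le_sum_mul_of_ne_zero _ (fun _ => by positivity) fun j _ => hd j

theorem Matrix.re_inner_toEuclideanLin_diagonal_le {d : n → ℝ} {c : ℝ} {w : EuclideanSpace 𝕜 n}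
    (hd : ∀ j, w j ≠ 0 → d j ≤ c) :
    RCLike.re ⟪w, toEuclideanLin (diagonal fun j => (d j : 𝕜)) w⟫_𝕜 ≤ c * ‖w‖ ^ 2 := by
  rw [re_inner_toEuclideanLin_diagonal, EuclideanSpace.norm_sq_eq]
  exact Finset.sum_mul_le_mul_sum_of_ne_zero _ (fun _ => by positivity)
    fun j hj => hd j (by simpa using hj)

theorem Matrix.IsHermitian.re_inner_eigenvectorBasis {A : Matrix n n 𝕜} (hA : A.IsHermitian)
    (i : n) :
    RCLike.re ⟪hA.eigenvectorBasis i, toEuclideanLin A (hA.eigenvectorBasis i)⟫_𝕜 =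
      hA.eigenvalues i := by
  rw [hA.toEuclideanLin_eigenvectorBasis, inner_smul_right, inner_self_eq_norm_sq_to_K,
    hA.eigenvectorBasis.orthonormal.1 i]
  simp

theorem Matrix.IsHermitian.mul_norm_sq_le_re_inner {A : Matrix n n 𝕜} (hA : A.IsHermitian)
    {c : ℝ} {w : EuclideanSpace 𝕜 n}
    (h : ∀ i, ⟪hA.eigenvectorBasis i, w⟫_𝕜 ≠ 0 → c ≤ hA.eigenvalues i) :
    c * ‖w‖ ^ 2 ≤ RCLike.re ⟪w, toEuclideanLin A w⟫_𝕜 := by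
  rw [hA.re_inner_toEuclideanLin, ← hA.eigenvectorBasis.sum_sq_norm_inner_right]
  exact Finset.mul_sum_le_sum_mul_of_ne_zero _ (fun _ => by positivity)
    fun i hi => h i (by simpa using hi)

theorem EuclideanSpace.exists_ne_zero_supported_on_pair_inner_eq_zero {i j : n} (hij : i ≠ j)
    (g : EuclideanSpace 𝕜 n) :
    ∃ w : EuclideanSpace 𝕜 n, w ≠ 0 ∧ (∀ k, w k ≠ 0 → k = i ∨ k = j) ∧ ⟪g, w⟫_𝕜 = 0 := by
  by_cases hgi : g i = 0
  · exact ⟨single i 1, by simp, fun k hk => .inl (by simpa using hk),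
      by simp [inner_single_right, hgi]⟩
  · refine ⟨single i (starRingEnd 𝕜 (g j)) - single j (starRingEnd 𝕜 (g i)), ?_,
      fun k hk => ?_, ?_⟩
    · intro h
      simpa [hij.symm, hgi] using congrArg (· j) h
    · by_contra! hk'
      simp [hk'.1, hk'.2] at hk
    · rw [inner_sub_right, inner_single_right, inner_single_right]
      ring

end QuadraticForm

theorem Matrix.IsHermitian.sortedEigenvalues_mul_norm_sq_le_re_inner {𝕜 : Type} [RCLike 𝕜]
    {N : ℕ} {A : Matrix (Fin N) (Fin N) 𝕜} (hA : A.IsHermitian) (k : Fin N)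
    {w : EuclideanSpace 𝕜 (Fin N)}
    (hw : ∀ i < k, ⟪hA.eigenvectorBasis (Tuple.sort hA.eigenvalues i), w⟫_𝕜 = 0) :
    sortedEigenvalues hA k * ‖w‖ ^ 2 ≤ RCLike.re ⟪w, toEuclideanLin A w⟫_𝕜 := by
  refine hA.mul_norm_sq_le_re_inner fun i hi => ?_
  set σ := Tuple.sort hA.eigenvalues
  have hk : k ≤ σ.symm i := not_lt.1 fun hlt => hi (by simpa using hw _ hlt)
  calc sortedEigenvalues hA k ≤ sortedEigenvalues hA (σ.symm i) := Tuple.monotone_sort _ hk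
    _ = hA.eigenvalues i := by simp [sortedEigenvalues, σ]

theorem abs_re_inner_toEuclideanLin_sub_le {n : ℕ} (A B : Matrix (Fin n) (Fin n) ℂ)
    (v : EuclideanSpace ℂ (Fin n)) :
    |RCLike.re ⟪v, toEuclideanLin A v⟫_ℂ - RCLike.re ⟪v, toEuclideanLin B v⟫_ℂ| ≤
      opNormRect (A - B) * ‖v‖ ^ 2 := by
  rw [← map_sub, ← inner_sub_right, ← LinearMap.sub_apply, ← map_sub]
  calc |RCLike.re ⟪v, toEuclideanLin (A - B) v⟫_ℂ|
      ≤ ‖⟪v, toEuclideanLin (A - B) v⟫_ℂ‖ := RCLike.abs_re_le_norm _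
    _ ≤ ‖v‖ * ‖toEuclideanLin (A - B) v‖ := norm_inner_le_norm _ _
    _ ≤ ‖v‖ * (opNormRect (A - B) * ‖v‖) := by
      gcongr
      exact (LinearMap.toContinuousLinearMap (toEuclideanLin (A - B))).le_opNorm v
    _ = opNormRect (A - B) * ‖v‖ ^ 2 := by ring

theorem Matrix.conjTranspose_mul_mul_eq_diagonal {m n α : Type*} [Fintype m] [Fintype n]
    [DecidableEq n] [CommSemiring α] [Star α] {U : Matrix m n α} {A : Matrix m m α} {d : n → α}
    (hU : Uᴴ * U = 1) (hA : ∀ j, A *ᵥ (fun i => U i j) = d j • fun i => U i j) :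
    Uᴴ * A * U = diagonal d := by
  have hAU : A * U = U * diagonal d := by
    ext i j
    rw [mul_diagonal, mul_apply]
    simpa [mulVec, dotProduct, mul_comm] using congrFun (hA j) i
  rw [Matrix.mul_assoc, hAU, ← Matrix.mul_assoc, hU, Matrix.one_mul]

section GapStability

variable {N : ℕ} {H : Matrix (Fin N) (Fin N) ℂ} (hH : H.IsHermitian) {d : Fin N → ℝ} {c : ℝ}

theorem le_sortedEigenvalues_zero_add_opNormRect (hN : 0 < N) (hd : ∀ j, c ≤ d j) :
    c ≤ sortedEigenvalues hH ⟨0, hN⟩ + opNormRect (H - diagonal fun j => (d j : ℂ)) := by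
  set g := hH.eigenvectorBasis (Tuple.sort hH.eigenvalues ⟨0, hN⟩)
  have hg : ‖g‖ = 1 := hH.eigenvectorBasis.orthonormal.1 _
  have hHg : RCLike.re ⟪g, toEuclideanLin H g⟫_ℂ = sortedEigenvalues hH ⟨0, hN⟩ :=
    hH.re_inner_eigenvectorBasis _
  have hDg : c * ‖g‖ ^ 2 ≤ RCLike.re ⟪g, toEuclideanLin (diagonal fun j => (d j : ℂ)) g⟫_ℂ :=
    le_re_inner_toEuclideanLin_diagonal hd g
  have hR := abs_le.1 (abs_re_inner_toEuclideanLin_sub_le H (diagonal fun j => (d j : ℂ)) g)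
  rw [hg, one_pow, mul_one] at hDg hR
  linarith [hR.1]

theorem sortedEigenvalues_one_le_add_opNormRect (hN : 1 < N) {i j : Fin N} (hij : i ≠ j)
    (hi : d i ≤ c) (hj : d j ≤ c) :
    sortedEigenvalues hH ⟨1, hN⟩ ≤ c + opNormRect (H - diagonal fun j => (d j : ℂ)) := by
  obtain ⟨w, hw0, hsupp, hperp⟩ := EuclideanSpace.exists_ne_zero_supported_on_pair_inner_eq_zero hij
    (hH.eigenvectorBasis (Tuple.sort hH.eigenvalues ⟨0, by omega⟩))
  have hHw := hH.sortedEigenvalues_mul_norm_sq_le_re_inner ⟨1, hN⟩ (w := w) fun k hk => by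
    rwa [show k = ⟨0, by omega⟩ from Fin.ext (by simpa [Fin.lt_def] using hk)]
  have hDw : RCLike.re ⟪w, toEuclideanLin (diagonal fun j => (d j : ℂ)) w⟫_ℂ ≤ c * ‖w‖ ^ 2 :=
    re_inner_toEuclideanLin_diagonal_le fun k hk => (hsupp k hk).elim (· ▸ hi) (· ▸ hj)
  have hR := abs_le.1 (abs_re_inner_toEuclideanLin_sub_le H (diagonal fun j => (d j : ℂ)) w)
  have hw : 0 < ‖w‖ ^ 2 := pow_pos (norm_pos_iff.2 hw0) 2
  refine le_of_mul_le_mul_right ?_ hw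
  rw [add_mul]
  linarith [hR.2]

end GapStability

theorem simulation_gap (N M : ℕ) (hN : 2 ≤ N) (hNM : N ≤ M)
    (H : Matrix (Fin N) (Fin N) ℂ) (Hsim : Matrix (Fin M) (Fin M) ℂ)
    (hH : H.IsHermitian) (hSim : Hsim.IsHermitian)
    (δ ε : ℝ)
    (hgap : sortedEigenvalues hH ⟨1, by omega⟩ - sortedEigenvalues hH ⟨0, by omega⟩ ≥ δ)
    (Et : Matrix (Fin M) (Fin N) ℂ)
    (hEt : Etᴴ * Et = 1)
    (hlow : ∀ j : Fin N, Hsim.mulVec (fun i => Et i j) =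
      ((sortedEigenvalues hSim (Fin.castLE hNM j) : ℝ) : ℂ) • fun i => Et i j)
    (hHapprox : opNormRect (H - Etᴴ * Hsim * Et) ≤ ε) :
    sortedEigenvalues hSim ⟨1, by omega⟩ - sortedEigenvalues hSim ⟨0, by omega⟩ ≥
      δ - 2 * ε := by
  set d : Fin N → ℝ := fun j => sortedEigenvalues hSim (Fin.castLE hNM j)
  have hd : Monotone d :=
    (Tuple.monotone_sort hSim.eigenvalues).comp (Fin.strictMono_castLE hNM).monotone
  rw [conjTranspose_mul_mul_eq_diagonal hEt hlow] at hHapprox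
  have hground := le_sortedEigenvalues_zero_add_opNormRect hH (by omega)
    fun j => hd (show (⟨0, by omega⟩ : Fin N) ≤ j from Nat.zero_le _)
  have hexcited := sortedEigenvalues_one_le_add_opNormRect hH (by omega)
    (i := ⟨0, by omega⟩) (j := ⟨1, by omega⟩) (by simp) (hd (by simp)) le_rfl
  change d ⟨1, by omega⟩ - d ⟨0, by omega⟩ ≥ δ - 2 * ε
  linarith
end

section
/- Let H_0, V be Hermitian operators on a finite-dimensional Hilbert space decomposed as H_− ⊕ H_+ with projections P_±. Suppose H_0 is block-diagonal, P_−H_0P_− = ζ·P_− for some real ζ, and all eigenvalues of P_+H_0P_+ are at least ζ + Δ. Let H_target be a Hermitian operator on H_− with ‖H_target − P_−H_0P_− − P_−VP_−‖ ≤ ε/2 (as operators on H_−). If Δ ≥ C·(ε⁻¹‖V‖² + ε_enc⁻¹‖V‖) for a sufficiently large universal constant C, then H_sim := H_0 + V has its dim(H_−) smallest eigenvalues each within ε of the corresponding eigenvalues of H_target (in sorted order). -/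
open Matrix

/-!
Let `K = P₋(H₀ + V)P₋ = ζ + P₋VP₋`. Cauchy interlacing gives `λⱼ(H₀ + V) ≤ λⱼ(K)`. Conversely,
on the Courant–Fischer test space of vectors `y + z` (`y ∈ H₋` orthogonal to the first `j`
eigenvectors of `K`, `z ∈ H₊`) the quadratic form of `H₀ + V` is at least
`λⱼ(K)‖y‖² + (ζ + Δ)‖z‖² - ‖V‖(2‖y‖‖z‖ + ‖z‖²)`; as `λⱼ(K) ≤ ζ + ‖V‖`, a gap with
`εΔ ≥ 10‖V‖²` absorbs the cross term at the cost of `ε/2`, so `λⱼ(H₀ + V) ≥ λⱼ(K) - ε/2`.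
Finally `H_target` and `K` have quadratic forms within `ε/2`, hence (Weyl) sorted eigenvalues
within `ε/2`. The constant is `C = 10`.
-/

open scoped InnerProductSpace

namespace FirstOrderReduction

section QuadForm

variable {𝕜 : Type} [RCLike 𝕜] {n : ℕ}

def quadForm (M : Matrix (Fin n) (Fin n) 𝕜) (x : EuclideanSpace 𝕜 (Fin n)) : ℝ :=
  RCLike.re ⟪x, toEuclideanLin M x⟫_𝕜

lemma quadForm_add (M N : Matrix (Fin n) (Fin n) 𝕜) (x : EuclideanSpace 𝕜 (Fin n)) :
    quadForm (M + N) x = quadForm M x + quadForm N x := by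
  simp [quadForm, inner_add_right]

lemma quadForm_sub (M N : Matrix (Fin n) (Fin n) 𝕜) (x : EuclideanSpace 𝕜 (Fin n)) :
    quadForm (M - N) x = quadForm M x - quadForm N x := by
  simp [quadForm, inner_sub_right]

lemma quadForm_smul_one (c : ℝ) (x : EuclideanSpace 𝕜 (Fin n)) :
    quadForm ((c : 𝕜) • (1 : Matrix (Fin n) (Fin n) 𝕜)) x = c * ‖x‖ ^ 2 := by
  rw [quadForm, map_smul, LinearMap.smul_apply, toLpLin_one, LinearMap.id_apply, inner_smul_right,
    inner_self_eq_norm_sq_to_K, ← RCLike.ofReal_pow, ← RCLike.ofReal_mul, RCLike.ofReal_re]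

end QuadForm

section Spectrum

variable {𝕜 : Type} [RCLike 𝕜] {n : ℕ} {M : Matrix (Fin n) (Fin n) 𝕜} (hM : M.IsHermitian)

noncomputable def sortedEigenvectorBasis : OrthonormalBasis (Fin n) 𝕜 (EuclideanSpace 𝕜 (Fin n)) :=
  hM.eigenvectorBasis.reindex (Tuple.sort hM.eigenvalues).symm

lemma toEuclideanLin_sortedEigenvectorBasis (i : Fin n) :
    toEuclideanLin M (sortedEigenvectorBasis hM i) =
      (sortedEigenvalues hM i : 𝕜) • sortedEigenvectorBasis hM i := by
  have := hM.mulVec_eigenvectorBasis (Tuple.sort hM.eigenvalues i)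
  ext k
  simpa [sortedEigenvectorBasis, sortedEigenvalues] using congrFun this k

lemma sortedEigenvalues_monotone : Monotone (sortedEigenvalues hM) :=
  Tuple.monotone_sort hM.eigenvalues

lemma quadForm_sub_mul_norm_sq (c : ℝ) (x : EuclideanSpace 𝕜 (Fin n)) :
    quadForm M x - c * ‖x‖ ^ 2 =
      ∑ i, (sortedEigenvalues hM i - c) * ‖⟪sortedEigenvectorBasis hM i, x⟫_𝕜‖ ^ 2 := by
  set u := sortedEigenvectorBasis hM
  have hterm : ∀ i, ⟪x, u i⟫_𝕜 * ⟪u i, toEuclideanLin M x⟫_𝕜 =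
      ((sortedEigenvalues hM i * ‖⟪u i, x⟫_𝕜‖ ^ 2 : ℝ) : 𝕜) := by
    intro i
    rw [← isSymmetric_toEuclideanLin_iff.mpr hM, toEuclideanLin_sortedEigenvectorBasis,
      inner_smul_left, ← inner_conj_symm x, RCLike.conj_ofReal]
    push_cast
    rw [← RCLike.conj_mul]
    ring
  rw [quadForm, ← u.sum_inner_mul_inner, ← u.sum_sq_norm_inner_right x, Finset.mul_sum, map_sum,
    ← Finset.sum_sub_distrib]
  simp only [hterm, RCLike.ofReal_re, sub_mul]

lemma inner_sortedEigenvectorBasis_eq_zero {s : Set (Fin n)} {i : Fin n} (hi : i ∈ s)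
    {x : EuclideanSpace 𝕜 (Fin n)}
    (hx : x ∈ (Submodule.span 𝕜 (sortedEigenvectorBasis hM '' s))ᗮ) :
    ⟪sortedEigenvectorBasis hM i, x⟫_𝕜 = 0 :=
  Submodule.inner_right_of_mem_orthogonal (Submodule.subset_span (Set.mem_image_of_mem _ hi)) hx

lemma span_sortedEigenvectorBasis_le_orthogonal {s t : Set (Fin n)} (hst : Disjoint s t) :
    Submodule.span 𝕜 (sortedEigenvectorBasis hM '' s) ≤
      (Submodule.span 𝕜 (sortedEigenvectorBasis hM '' t))ᗮ := by
  refine Submodule.isOrtho_iff_le.mp (Submodule.isOrtho_span.mpr ?_)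
  rintro _ ⟨i, hi, rfl⟩ _ ⟨k, hk, rfl⟩
  exact (sortedEigenvectorBasis hM).orthonormal.inner_eq_zero (hst.ne_of_mem hi hk)

lemma finrank_span_sortedEigenvectorBasis (s : Set (Fin n)) [Fintype s] :
    Module.finrank 𝕜 (Submodule.span 𝕜 (sortedEigenvectorBasis hM '' s)) = Fintype.card s := by
  rw [Set.image_eq_range, finrank_span_eq_card]
  exact (sortedEigenvectorBasis hM).orthonormal.linearIndependent.comp _ Subtype.val_injective

lemma finrank_span_sortedEigenvectorBasis_Iic (j : Fin n) :
    Module.finrank 𝕜 (Submodule.span 𝕜 (sortedEigenvectorBasis hM '' Set.Iic j)) = j + 1 := by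
  rw [finrank_span_sortedEigenvectorBasis]
  simp

lemma finrank_orthogonal_span_sortedEigenvectorBasis_Iio (j : Fin n) :
    Module.finrank 𝕜 (Submodule.span 𝕜 (sortedEigenvectorBasis hM '' Set.Iio j))ᗮ + j = n := by
  have h :=
    (Submodule.span 𝕜 (sortedEigenvectorBasis hM '' Set.Iio j)).finrank_add_finrank_orthogonal
  rw [finrank_span_sortedEigenvectorBasis, finrank_euclideanSpace_fin] at h
  simpa [add_comm] using h

lemma quadForm_le_of_mem_span_Iic {j : Fin n} {x : EuclideanSpace 𝕜 (Fin n)}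
    (hx : x ∈ Submodule.span 𝕜 (sortedEigenvectorBasis hM '' Set.Iic j)) :
    quadForm M x ≤ sortedEigenvalues hM j * ‖x‖ ^ 2 := by
  have hx' := span_sortedEigenvectorBasis_le_orthogonal hM (Set.Iic_disjoint_Ioi le_rfl) hx
  rw [← sub_nonpos, quadForm_sub_mul_norm_sq hM]
  refine Finset.sum_nonpos fun i _ => ?_
  rcases le_or_gt i j with hij | hij
  · exact mul_nonpos_of_nonpos_of_nonneg (sub_nonpos.2 (sortedEigenvalues_monotone hM hij))
      (sq_nonneg _)
  · simp [inner_sortedEigenvectorBasis_eq_zero hM (Set.mem_Ioi.2 hij) hx']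

lemma le_quadForm_of_mem_orthogonal_span_Iio {j : Fin n} {x : EuclideanSpace 𝕜 (Fin n)}
    (hx : x ∈ (Submodule.span 𝕜 (sortedEigenvectorBasis hM '' Set.Iio j))ᗮ) :
    sortedEigenvalues hM j * ‖x‖ ^ 2 ≤ quadForm M x := by
  rw [← sub_nonneg, quadForm_sub_mul_norm_sq hM]
  refine Finset.sum_nonneg fun i _ => ?_
  rcases lt_or_ge i j with hij | hij
  · simp [inner_sortedEigenvectorBasis_eq_zero hM (Set.mem_Iio.2 hij) hx]
  · exact mul_nonneg (sub_nonneg.2 (sortedEigenvalues_monotone hM hij)) (sq_nonneg _)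

lemma mul_norm_sq_le_quadForm_of_forall_le {m : ℝ} (hm : ∀ i, m ≤ hM.eigenvalues i)
    (x : EuclideanSpace 𝕜 (Fin n)) : m * ‖x‖ ^ 2 ≤ quadForm M x := by
  rw [← sub_nonneg, quadForm_sub_mul_norm_sq hM]
  exact Finset.sum_nonneg fun i _ => mul_nonneg (sub_nonneg.2 (hm _)) (sq_nonneg _)

lemma exists_mem_mem_ne_zero_of_finrank_lt {K V : Type*} [DivisionRing K] [AddCommGroup V]
    [Module K V] [FiniteDimensional K V] (S W : Submodule K V)
    (h : Module.finrank K V < Module.finrank K S + Module.finrank K W) :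
    ∃ x ∈ S, x ∈ W ∧ x ≠ 0 := by
  by_contra! hc
  exact h.not_ge (Submodule.finrank_add_finrank_le_of_disjoint (Submodule.disjoint_def.2 hc))

theorem sortedEigenvalues_le_of_forall_quadForm_le (j : Fin n)
    (S : Submodule 𝕜 (EuclideanSpace 𝕜 (Fin n))) (hS : (j : ℕ) < Module.finrank 𝕜 S) {c : ℝ}
    (h : ∀ x ∈ S, quadForm M x ≤ c * ‖x‖ ^ 2) : sortedEigenvalues hM j ≤ c := by
  have hL := finrank_orthogonal_span_sortedEigenvectorBasis_Iio hM j
  obtain ⟨x, hxS, hxL, hx0⟩ := exists_mem_mem_ne_zero_of_finrank_lt S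
    (Submodule.span 𝕜 (sortedEigenvectorBasis hM '' Set.Iio j))ᗮ (by
    rw [finrank_euclideanSpace_fin]; omega)
  exact le_of_mul_le_mul_right ((le_quadForm_of_mem_orthogonal_span_Iio hM hxL).trans (h x hxS))
    (pow_pos (norm_pos_iff.2 hx0) 2)

theorem le_sortedEigenvalues_of_forall_le_quadForm (j : Fin n)
    (W : Submodule 𝕜 (EuclideanSpace 𝕜 (Fin n))) (hW : n ≤ Module.finrank 𝕜 W + j) {c : ℝ}
    (h : ∀ x ∈ W, c * ‖x‖ ^ 2 ≤ quadForm M x) : c ≤ sortedEigenvalues hM j := by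
  have hL := finrank_span_sortedEigenvectorBasis_Iic hM j
  obtain ⟨x, hxL, hxW, hx0⟩ := exists_mem_mem_ne_zero_of_finrank_lt
    (Submodule.span 𝕜 (sortedEigenvectorBasis hM '' Set.Iic j)) W (by
    rw [finrank_euclideanSpace_fin]; omega)
  exact le_of_mul_le_mul_right ((h x hxW).trans (quadForm_le_of_mem_span_Iic hM hxL))
    (pow_pos (norm_pos_iff.2 hx0) 2)

theorem sortedEigenvalues_le_add_of_forall_quadForm_le {X Y : Matrix (Fin n) (Fin n) 𝕜}
    (hX : X.IsHermitian) (hY : Y.IsHermitian) {c : ℝ}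
    (h : ∀ x, quadForm X x ≤ quadForm Y x + c * ‖x‖ ^ 2) (j : Fin n) :
    sortedEigenvalues hX j ≤ sortedEigenvalues hY j + c := by
  refine sortedEigenvalues_le_of_forall_quadForm_le hX j
    (Submodule.span 𝕜 (sortedEigenvectorBasis hY '' Set.Iic j)) ?_ fun x hx => ?_
  · simp [finrank_span_sortedEigenvectorBasis_Iic]
  · linarith [h x, quadForm_le_of_mem_span_Iic hY hx]

theorem abs_sortedEigenvalues_sub_le {X Y : Matrix (Fin n) (Fin n) 𝕜}
    (hX : X.IsHermitian) (hY : Y.IsHermitian) {c : ℝ}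
    (h : ∀ x, |quadForm X x - quadForm Y x| ≤ c * ‖x‖ ^ 2) (j : Fin n) :
    |sortedEigenvalues hX j - sortedEigenvalues hY j| ≤ c := by
  have hXY := sortedEigenvalues_le_add_of_forall_quadForm_le hX hY
    (fun x => by linarith [(abs_le.1 (h x)).2]) j
  have hYX := sortedEigenvalues_le_add_of_forall_quadForm_le hY hX
    (fun x => by linarith [(abs_le.1 (h x)).1]) j
  exact abs_le.2 ⟨by linarith, by linarith⟩

end Spectrum

section OperatorNorm

variable {m n : ℕ}

lemma abs_re_inner_toEuclideanLin_le (M : Matrix (Fin m) (Fin n) ℂ)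
    (x : EuclideanSpace ℂ (Fin m)) (y : EuclideanSpace ℂ (Fin n)) :
    |RCLike.re ⟪x, toEuclideanLin M y⟫_ℂ| ≤ opNormRect M * ‖x‖ * ‖y‖ :=
  calc |RCLike.re ⟪x, toEuclideanLin M y⟫_ℂ| ≤ ‖x‖ * ‖toEuclideanLin M y‖ :=
        (RCLike.abs_re_le_norm _).trans (norm_inner_le_norm _ _)
    _ ≤ ‖x‖ * (opNormRect M * ‖y‖) :=
        mul_le_mul_of_nonneg_left ((LinearMap.toContinuousLinearMap _).le_opNorm y) (norm_nonneg x)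
    _ = opNormRect M * ‖x‖ * ‖y‖ := by ring

lemma abs_quadForm_le (M : Matrix (Fin n) (Fin n) ℂ) (x : EuclideanSpace ℂ (Fin n)) :
    |quadForm M x| ≤ opNormRect M * ‖x‖ ^ 2 := by
  simpa [quadForm, sq, mul_assoc] using abs_re_inner_toEuclideanLin_le M x x

lemma abs_quadForm_add_sub_le (M : Matrix (Fin n) (Fin n) ℂ) (x w : EuclideanSpace ℂ (Fin n)) :
    |quadForm M (x + w) - quadForm M x| ≤ opNormRect M * (2 * ‖x‖ * ‖w‖ + ‖w‖ ^ 2) := by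
  have hexpand : quadForm M (x + w) - quadForm M x =
      RCLike.re ⟪x, toEuclideanLin M w⟫_ℂ + RCLike.re ⟪w, toEuclideanLin M x⟫_ℂ + quadForm M w := by
    simp only [quadForm, map_add, inner_add_left, inner_add_right]
    ring
  rw [hexpand]
  have h₁ := abs_re_inner_toEuclideanLin_le M x w
  have h₂ := abs_re_inner_toEuclideanLin_le M w x
  have h₃ := abs_quadForm_le M w
  calc _ ≤ _ := abs_add_three _ _ _
    _ ≤ _ := add_le_add_three h₁ h₂ h₃
    _ = _ := by ring

end OperatorNorm

section Blocks

variable {𝕜 : Type} [RCLike 𝕜] {a b : ℕ}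

def finAppend :
    (EuclideanSpace 𝕜 (Fin a) × EuclideanSpace 𝕜 (Fin b)) →ₗ[𝕜] EuclideanSpace 𝕜 (Fin (a + b)) where
  toFun w := WithLp.toLp 2 (Fin.append (WithLp.ofLp w.1) (WithLp.ofLp w.2))
  map_add' w w' := by
    ext k
    induction k using Fin.addCases <;> simp
  map_smul' c w := by
    ext k
    induction k using Fin.addCases <;> simp

@[simp] lemma finAppend_apply_castAdd (w : EuclideanSpace 𝕜 (Fin a) × EuclideanSpace 𝕜 (Fin b))
    (i : Fin a) : finAppend w (Fin.castAdd b i) = w.1 i := by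
  simp [finAppend]

@[simp] lemma finAppend_apply_natAdd (w : EuclideanSpace 𝕜 (Fin a) × EuclideanSpace 𝕜 (Fin b))
    (i : Fin b) : finAppend w (Fin.natAdd a i) = w.2 i := by
  simp [finAppend]

lemma inner_finAppend (w w' : EuclideanSpace 𝕜 (Fin a) × EuclideanSpace 𝕜 (Fin b)) :
    ⟪finAppend w, finAppend w'⟫_𝕜 = ⟪w.1, w'.1⟫_𝕜 + ⟪w.2, w'.2⟫_𝕜 := by
  simp [PiLp.inner_apply, Fin.sum_univ_add]

lemma norm_finAppend_sq (w : EuclideanSpace 𝕜 (Fin a) × EuclideanSpace 𝕜 (Fin b)) :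
    ‖finAppend w‖ ^ 2 = ‖w.1‖ ^ 2 + ‖w.2‖ ^ 2 := by
  have := congrArg RCLike.re (inner_finAppend w w)
  simpa only [inner_self_eq_norm_sq, map_add] using this

lemma norm_finAppend_inl (y : EuclideanSpace 𝕜 (Fin a)) :
    ‖finAppend (y, (0 : EuclideanSpace 𝕜 (Fin b)))‖ = ‖y‖ := by
  rw [← sq_eq_sq₀ (norm_nonneg _) (norm_nonneg _), norm_finAppend_sq, norm_zero,
    zero_pow two_ne_zero, add_zero]

lemma norm_finAppend_inr (z : EuclideanSpace 𝕜 (Fin b)) :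
    ‖finAppend ((0 : EuclideanSpace 𝕜 (Fin a)), z)‖ = ‖z‖ := by
  rw [← sq_eq_sq₀ (norm_nonneg _) (norm_nonneg _), norm_finAppend_sq, norm_zero,
    zero_pow two_ne_zero, zero_add]

lemma finAppend_injective : Function.Injective (finAppend (𝕜 := 𝕜) (a := a) (b := b)) := by
  refine (injective_iff_map_eq_zero _).2 fun w hw => ?_
  ext i
  · simpa using congrArg (· (Fin.castAdd b i)) hw
  · simpa using congrArg (· (Fin.natAdd a i)) hw

lemma toEuclideanLin_finAppend (M : Matrix (Fin (a + b)) (Fin (a + b)) 𝕜)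
    (w : EuclideanSpace 𝕜 (Fin a) × EuclideanSpace 𝕜 (Fin b)) :
    toEuclideanLin M (finAppend w) = finAppend
      (toEuclideanLin (M.submatrix (Fin.castAdd b) (Fin.castAdd b)) w.1 +
        toEuclideanLin (M.submatrix (Fin.castAdd b) (Fin.natAdd a)) w.2,
       toEuclideanLin (M.submatrix (Fin.natAdd a) (Fin.castAdd b)) w.1 +
        toEuclideanLin (M.submatrix (Fin.natAdd a) (Fin.natAdd a)) w.2) := by
  ext k
  induction k using Fin.addCases <;>
    simp [toLpLin_apply, Matrix.mulVec, dotProduct, Fin.sum_univ_add, finAppend]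

lemma quadForm_finAppend (M : Matrix (Fin (a + b)) (Fin (a + b)) 𝕜)
    (y : EuclideanSpace 𝕜 (Fin a)) (z : EuclideanSpace 𝕜 (Fin b)) :
    quadForm M (finAppend (y, z)) =
      quadForm (M.submatrix (Fin.castAdd b) (Fin.castAdd b)) y +
        RCLike.re ⟪y, toEuclideanLin (M.submatrix (Fin.castAdd b) (Fin.natAdd a)) z⟫_𝕜 +
        RCLike.re ⟪z, toEuclideanLin (M.submatrix (Fin.natAdd a) (Fin.castAdd b)) y⟫_𝕜 +
        quadForm (M.submatrix (Fin.natAdd a) (Fin.natAdd a)) z := by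
  simp only [quadForm, toEuclideanLin_finAppend, inner_finAppend, inner_add_right, map_add]
  ring

lemma quadForm_finAppend_zero (M : Matrix (Fin (a + b)) (Fin (a + b)) 𝕜)
    (y : EuclideanSpace 𝕜 (Fin a)) :
    quadForm M (finAppend (y, 0)) = quadForm (M.submatrix (Fin.castAdd b) (Fin.castAdd b)) y := by
  rw [quadForm_finAppend]
  simp [quadForm]

theorem sortedEigenvalues_castLE_le_submatrix {M : Matrix (Fin (a + b)) (Fin (a + b)) 𝕜}
    (hM : M.IsHermitian) (j : Fin a) :
    sortedEigenvalues hM (Fin.castLE (Nat.le_add_right a b) j) ≤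
      sortedEigenvalues (hM.submatrix (Fin.castAdd b)) j := by
  set hN := hM.submatrix (Fin.castAdd b)
  set L := Submodule.span 𝕜 (sortedEigenvectorBasis hN '' Set.Iic j)
  set f := finAppend ∘ₗ LinearMap.inl 𝕜 _ (EuclideanSpace 𝕜 (Fin b)) ∘ₗ L.subtype
  have hf : Function.Injective f :=
    finAppend_injective.comp ((LinearMap.inl_injective).comp Subtype.val_injective)
  refine sortedEigenvalues_le_of_forall_quadForm_le hM _ (LinearMap.range f) ?_ ?_
  · rw [LinearMap.finrank_range_of_inj hf, finrank_span_sortedEigenvectorBasis_Iic]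
    exact j.val.lt_succ_self
  · rintro _ ⟨⟨y, hy⟩, rfl⟩
    simp only [f, LinearMap.comp_apply, Submodule.subtype_apply, LinearMap.inl_apply,
      quadForm_finAppend_zero, norm_finAppend_inl]
    exact quadForm_le_of_mem_span_Iic hN hy

theorem le_sortedEigenvalues_castLE {M : Matrix (Fin (a + b)) (Fin (a + b)) 𝕜}
    (hM : M.IsHermitian) {N : Matrix (Fin a) (Fin a) 𝕜} (hN : N.IsHermitian) (j : Fin a) {c : ℝ}
    (h : ∀ y z, sortedEigenvalues hN j * ‖y‖ ^ 2 ≤ quadForm N y →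
      c * (‖y‖ ^ 2 + ‖z‖ ^ 2) ≤ quadForm M (finAppend (y, z))) :
    c ≤ sortedEigenvalues hM (Fin.castLE (Nat.le_add_right a b) j) := by
  have hL := finrank_orthogonal_span_sortedEigenvectorBasis_Iio hN j
  set L := Submodule.span 𝕜 (sortedEigenvectorBasis hN '' Set.Iio j)
  set f := finAppend ∘ₗ (Lᗮ.subtype.prodMap (LinearMap.id : _ →ₗ[𝕜] EuclideanSpace 𝕜 (Fin b)))
  have hf : Function.Injective f :=
    finAppend_injective.comp (Prod.map_injective.2 ⟨Subtype.val_injective, Function.injective_id⟩)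
  refine le_sortedEigenvalues_of_forall_le_quadForm hM _ (LinearMap.range f) ?_ ?_
  · rw [LinearMap.finrank_range_of_inj hf, Module.finrank_prod, finrank_euclideanSpace_fin,
      Fin.val_castLE]
    omega
  · rintro _ ⟨⟨⟨y, hy⟩, z⟩, rfl⟩
    simpa [f, norm_finAppend_sq] using h y z (le_quadForm_of_mem_orthogonal_span_Iio hN hy)

end Blocks

lemma le_quadForm_add_finAppend {a b : ℕ} {H V : Matrix (Fin (a + b)) (Fin (a + b)) ℂ}
    (hlr : H.submatrix (Fin.castAdd b) (Fin.natAdd a) = 0)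
    (hrl : H.submatrix (Fin.natAdd a) (Fin.castAdd b) = 0)
    (y : EuclideanSpace ℂ (Fin a)) (z : EuclideanSpace ℂ (Fin b)) :
    quadForm ((H + V).submatrix (Fin.castAdd b) (Fin.castAdd b)) y +
        quadForm (H.submatrix (Fin.natAdd a) (Fin.natAdd a)) z -
        opNormRect V * (2 * ‖y‖ * ‖z‖ + ‖z‖ ^ 2) ≤
      quadForm (H + V) (finAppend (y, z)) := by
  have hH : quadForm H (finAppend (y, z)) =
      quadForm (H.submatrix (Fin.castAdd b) (Fin.castAdd b)) y +
        quadForm (H.submatrix (Fin.natAdd a) (Fin.natAdd a)) z := by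
    simp [quadForm_finAppend, hlr, hrl]
  have hV := abs_quadForm_add_sub_le V (finAppend (y, 0)) (finAppend (0, z))
  rw [← map_add, Prod.mk_add_mk, add_zero, zero_add, quadForm_finAppend_zero, norm_finAppend_inl,
    norm_finAppend_inr] at hV
  rw [quadForm_add, Matrix.submatrix_add, Pi.add_apply, Pi.add_apply, quadForm_add, hH]
  linarith [(abs_le.1 hV).1]

/-- After cancellation this says that the binary form `(ε/2)s² - 2vst + (Δ - 2v + ε/2)t²` is
positive semidefinite, which holds once `εΔ ≥ 10v²`. -/
lemma sub_half_mul_le_of_gap {ε v Δ ζ μ : ℝ} (hε : 0 < ε) (hgap : 10 * v ^ 2 ≤ Δ * ε)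
    (hμ : μ ≤ ζ + v) (s t : ℝ) :
    (μ - ε / 2) * (s ^ 2 + t ^ 2) ≤ μ * s ^ 2 + (ζ + Δ) * t ^ 2 - v * (2 * s * t + t ^ 2) := by
  nlinarith [sq_nonneg (ε * s - 2 * v * t), sq_nonneg ((ε - 2 * v) * t),
    mul_nonneg (sub_nonneg.2 hμ) (sq_nonneg t), mul_nonneg hε.le (sq_nonneg t),
    mul_nonneg (sub_nonneg.2 hgap) (sq_nonneg t), sq_nonneg (4 * v - ε)]

theorem abs_sortedEigenvalues_castLE_sub_submatrix_le {a b : ℕ}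
    {H V : Matrix (Fin (a + b)) (Fin (a + b)) ℂ} (hH : H.IsHermitian) (hHV : (H + V).IsHermitian)
    {ζ Δ ε : ℝ} (hε : 0 < ε) (hll : H.submatrix (Fin.castAdd b) (Fin.castAdd b) = (ζ : ℂ) • 1)
    (hlr : H.submatrix (Fin.castAdd b) (Fin.natAdd a) = 0)
    (hrr : ∀ i, ζ + Δ ≤ (hH.submatrix (Fin.natAdd a)).eigenvalues i)
    (hgap : 10 * opNormRect V ^ 2 ≤ Δ * ε) (j : Fin a) :
    |sortedEigenvalues hHV (Fin.castLE (Nat.le_add_right a b) j) -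
      sortedEigenvalues (hHV.submatrix (Fin.castAdd b)) j| ≤ ε / 2 := by
  set hK := hHV.submatrix (Fin.castAdd b)
  have hrl : H.submatrix (Fin.natAdd a) (Fin.castAdd b) = 0 := by
    rw [← hH, ← conjTranspose_submatrix, hlr, conjTranspose_zero]
  have hK_le : sortedEigenvalues hK j ≤ ζ + opNormRect V := by
    refine sortedEigenvalues_le_of_forall_quadForm_le hK j ⊤ (by simp) fun y _ => ?_
    have hV := (abs_le.1 (abs_quadForm_le V (finAppend (y, 0)))).2
    rw [quadForm_finAppend_zero, norm_finAppend_inl] at hV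
    have hζ : quadForm ((ζ : ℂ) • (1 : Matrix (Fin a) (Fin a) ℂ)) y = ζ * ‖y‖ ^ 2 :=
      quadForm_smul_one ζ y
    rw [Matrix.submatrix_add, Pi.add_apply, Pi.add_apply, quadForm_add, hll, hζ]
    linarith
  have hupper := sortedEigenvalues_castLE_le_submatrix hHV j
  have hlower : sortedEigenvalues hK j - ε / 2 ≤
      sortedEigenvalues hHV (Fin.castLE (Nat.le_add_right a b) j) :=
    le_sortedEigenvalues_castLE hHV hK j fun y z hy => by
      linarith [le_quadForm_add_finAppend (V := V) hlr hrl y z,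
        sub_half_mul_le_of_gap hε hgap hK_le ‖y‖ ‖z‖,
        mul_norm_sq_le_quadForm_of_forall_le _ hrr z]
  rw [abs_le]
  constructor <;> linarith

end FirstOrderReduction

open FirstOrderReduction in
/-- first-order perturbative reduction, eigenvalue form: on `ℂ^{a+b}` with
`H₋` the first `a` coordinates, suppose `H₀` is block-diagonal with `P₋H₀P₋ = ζ·P₋` and all
eigenvalues of `P₊H₀P₊` at least `ζ + Δ`, and `‖H_target − P₋H₀P₋ − P₋VP₋‖ ≤ ε/2`.  If
`Δ ≥ C(ε⁻¹‖V‖² + ε_enc⁻¹‖V‖)` for a sufficiently large universal constant `C`, then the `a`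
smallest eigenvalues of `H₀ + V` are each within `ε` of the corresponding eigenvalues of
`H_target` in sorted order. -/
theorem first_order_reduction :
    ∃ C : ℝ, 0 < C ∧
      ∀ (a b : ℕ) (H0 V : Matrix (Fin (a + b)) (Fin (a + b)) ℂ)
        (hH0 : H0.IsHermitian) (hV : V.IsHermitian)
        (ζ Δ ε εenc : ℝ) (hε : 0 < ε) (henc : 0 < εenc)
        (hblock : ∀ (i : Fin a) (j : Fin b), H0 (Fin.castAdd b i) (Fin.natAdd a j) = 0)
        (hmm : ∀ i j : Fin a, H0 (Fin.castAdd b i) (Fin.castAdd b j) =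
          if i = j then (ζ : ℂ) else 0)
        (hpp : ∀ hp : (Matrix.of fun i j : Fin b =>
            H0 (Fin.natAdd a i) (Fin.natAdd a j)).IsHermitian,
          ∀ i : Fin b, hp.eigenvalues i ≥ ζ + Δ)
        (Ht : Matrix (Fin a) (Fin a) ℂ) (hHt : Ht.IsHermitian)
        (happrox : opNormRect (Ht - (ζ : ℂ) • (1 : Matrix (Fin a) (Fin a) ℂ) -
          Matrix.of fun i j : Fin a => V (Fin.castAdd b i) (Fin.castAdd b j)) ≤ ε / 2)
        (hΔ : Δ ≥ C * (ε⁻¹ * opNormRect V ^ 2 + εenc⁻¹ * opNormRect V))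
        (hSim : (H0 + V).IsHermitian),
        ∀ j : Fin a,
          |sortedEigenvalues hSim (Fin.castLE (Nat.le_add_right a b) j) -
            sortedEigenvalues hHt j| ≤ ε := by
  refine ⟨10, by norm_num, fun a b H0 V hH0 _ ζ Δ ε εenc hε henc hblock hmm hpp Ht hHt happrox hΔ
    hSim j => ?_⟩
  have hgap : 10 * opNormRect V ^ 2 ≤ Δ * ε := by
    have : 0 ≤ εenc⁻¹ * opNormRect V := mul_nonneg (inv_nonneg.2 henc.le) (norm_nonneg _)
    calc 10 * opNormRect V ^ 2 = 10 * (ε⁻¹ * opNormRect V ^ 2) * ε := by field_simp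
      _ ≤ Δ * ε := by gcongr; linarith
  have hll : H0.submatrix (Fin.castAdd b) (Fin.castAdd b) = (ζ : ℂ) • 1 := by
    ext i k
    simp [hmm, Matrix.one_apply]
  have hlr : H0.submatrix (Fin.castAdd b) (Fin.natAdd a) = 0 := by
    ext i k
    exact hblock i k
  have hclose : ∀ y, |quadForm ((H0 + V).submatrix (Fin.castAdd b) (Fin.castAdd b)) y -
      quadForm Ht y| ≤ ε / 2 * ‖y‖ ^ 2 := by
    intro y
    rw [abs_sub_comm, ← quadForm_sub, Matrix.submatrix_add, Pi.add_apply, Pi.add_apply, hll,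
      ← sub_sub]
    exact (abs_quadForm_le _ y).trans (by gcongr; exact happrox)
  have hreduce := abs_sortedEigenvalues_castLE_sub_submatrix_le hH0 hSim hε hll hlr (hpp _) hgap j
  have htarget := abs_sortedEigenvalues_sub_le (hSim.submatrix (Fin.castAdd b)) hHt hclose j
  calc _ ≤ _ := abs_sub_le _ (sortedEigenvalues (hSim.submatrix (Fin.castAdd b)) j) _
    _ ≤ ε / 2 + ε / 2 := add_le_add hreduce htarget
    _ = ε := add_halves ε
end
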